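/- Let V be a type, E ⊆ V × V, and for each (u,v) ∈ E let d^{uv} : Fin 3 → ℝ give a diagonal 3×3 real matrix diag(d^{uv}). Then the following are equivalent: (i) there exists O : V → SO(3) such that for every (u,v) ∈ E the matrix O_u · diag(d^{uv}) · (O_v)ᵀ is diagonal with entries e : Fin 3 → ℝ satisfying e 0 ≤ −|e 1|; (ii) there exists an assignment to each vertex u of a signed permutation matrix Π_u with determinant 1 such that for every (u,v) ∈ E the matrix Π_u · diag(d^{uv}) · (Π_v)ᵀ is diagonal with entries e satisfying e 0 ≤ −|e 1|. -/
import Mathlib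

open Matrix

/-- `O` is a real 3×3 special orthogonal matrix. -/
def IsSO3 (O : Matrix (Fin 3) (Fin 3) ℝ) : Prop := O * Oᵀ = 1 ∧ O.det = 1

/-- `M` is a signed permutation matrix: exactly one nonzero entry, equal to `±1`,
in each row and column. -/
def IsSignedPerm (M : Matrix (Fin 3) (Fin 3) ℝ) : Prop :=
  ∃ (p : Equiv.Perm (Fin 3)) (s : Fin 3 → ℝ),
    (∀ j, s j = 1 ∨ s j = -1) ∧ M = Matrix.of fun i j => if i = p j then s j else 0

namespace XYZaux

abbrev M3 := Matrix (Fin 3) (Fin 3) ℝ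

/-- signed term of the determinant expansion -/
def term (A : M3) (r : Equiv.Perm (Fin 3)) : ℝ :=
  ((Equiv.Perm.sign r : ℤ) : ℝ) * ∏ j, A (r j) j

def c0 : Equiv.Perm (Fin 3) := 1
def c1 : Equiv.Perm (Fin 3) := Equiv.swap 0 1
def c2 : Equiv.Perm (Fin 3) := Equiv.swap 0 2
def c3 : Equiv.Perm (Fin 3) := Equiv.swap 1 2
def c4 : Equiv.Perm (Fin 3) := Equiv.swap 0 1 * Equiv.swap 1 2
def c5 : Equiv.Perm (Fin 3) := Equiv.swap 1 2 * Equiv.swap 0 1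

lemma perm_enum (r : Equiv.Perm (Fin 3)) :
    r = c0 ∨ r = c1 ∨ r = c2 ∨ r = c3 ∨ r = c4 ∨ r = c5 := by
  revert r; decide

noncomputable def pick (A : M3) : Equiv.Perm (Fin 3) :=
  if 0 < term A c0 then c0 else if 0 < term A c1 then c1 else
  if 0 < term A c2 then c2 else if 0 < term A c3 then c3 else
  if 0 < term A c4 then c4 else c5

noncomputable def sg (A : M3) (j : Fin 3) : ℝ :=
  if 0 < A (pick A j) j then 1 else -1

noncomputable def Phi (A : M3) : M3 :=
  Matrix.of fun i j => if i = pick A j then sg A j else 0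

lemma det_eq_sum_term (A : M3) : A.det = ∑ r, term A r := by
  rw [Matrix.det_apply]
  refine Finset.sum_congr rfl fun r _ => ?_
  unfold term
  simp [Units.smul_def, zsmul_eq_mul]

lemma pick_pos {A : M3} (h : A.det = 1) : 0 < term A (pick A) := by
  have hex : ∃ r, 0 < term A r := by
    by_contra hc
    push_neg at hc
    have : A.det ≤ 0 := by
      rw [det_eq_sum_term]
      exact Finset.sum_nonpos fun r _ => hc r
    linarith [this, h ▸ (zero_lt_one (α := ℝ))]
  obtain ⟨r, hr⟩ := hex
  unfold pick
  split_ifs with h0 h1 h2 h3 h4 <;> try assumption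
  rcases perm_enum r with rfl|rfl|rfl|rfl|rfl|rfl <;> first | exact hr | exact absurd hr (by assumption)

lemma pick_congr {A B : M3} (h : ∀ r, term A r = term B r) : pick A = pick B := by
  unfold pick
  rw [h c0, h c1, h c2, h c3, h c4]

lemma entry_ne {A : M3} (h : A.det = 1) (j : Fin 3) : A (pick A j) j ≠ 0 := by
  have := pick_pos h
  unfold term at this
  have hp : ∏ j, A (pick A j) j ≠ 0 := by
    intro h0; rw [h0, mul_zero] at this; exact lt_irrefl _ this
  exact Finset.prod_ne_zero_iff.mp hp j (Finset.mem_univ j)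

lemma sg_cases (A : M3) (j : Fin 3) : sg A j = 1 ∨ sg A j = -1 := by
  unfold sg; split_ifs <;> simp

lemma sg_sq (A : M3) (j : Fin 3) : sg A j * sg A j = 1 := by
  rcases sg_cases A j with h|h <;> rw [h] <;> norm_num

lemma sg_mul_pos {A : M3} (h : A.det = 1) (j : Fin 3) :
    0 < sg A j * A (pick A j) j := by
  have hne := entry_ne h j
  unfold sg
  split_ifs with hp
  · simpa using hp
  · push_neg at hp
    have : A (pick A j) j < 0 := lt_of_le_of_ne hp hne
    nlinarith


lemma phi_signedPerm (A : M3) : IsSignedPerm (Phi A) :=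
  ⟨pick A, sg A, sg_cases A, rfl⟩

lemma phi_apply (A : M3) (i j : Fin 3) :
    Phi A i j = if i = pick A j then sg A j else 0 := rfl

lemma det_phi {A : M3} (h : A.det = 1) : (Phi A).det = 1 := by
  have hdet : (Phi A).det =
      ((Equiv.Perm.sign (pick A) : ℤ) : ℝ) * ∏ j, sg A j := by
    rw [Matrix.det_apply]
    rw [Finset.sum_eq_single (pick A)]
    · simp [phi_apply, Units.smul_def, zsmul_eq_mul]
    · intro r _ hr
      have : ∃ j, r j ≠ pick A j := by
        by_contra hc; push_neg at hc
        exact hr (Equiv.ext hc)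
      obtain ⟨j, hj⟩ := this
      have hz : Phi A (r j) j = 0 := by rw [phi_apply, if_neg hj]
      have hz2 : (∏ i, Phi A (r i) i) = 0 := Finset.prod_eq_zero (Finset.mem_univ j) hz
      rw [hz2]; simp
    · simp
  have hpos : 0 < ∏ j, sg A j * A (pick A j) j :=
    Finset.prod_pos fun j _ => sg_mul_pos h j
  rw [Finset.prod_mul_distrib] at hpos
  have htpos := pick_pos h
  unfold term at htpos
  set S : ℝ := ((Equiv.Perm.sign (pick A) : ℤ) : ℝ) with hS
  have hS2 : S * S = 1 := by
    rcases Int.units_eq_one_or (Equiv.Perm.sign (pick A)) with hu|hu <;>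
      rw [hS, hu] <;> norm_num
  set G : ℝ := ∏ j, sg A j with hG
  set PA : ℝ := ∏ j, A (pick A j) j with hPA
  have hGG : G * G = 1 := by
    rw [hG, ← Finset.prod_mul_distrib]
    exact Finset.prod_eq_one fun j _ => sg_sq A j
  have h1 : 0 < (S * G) * (PA * PA) := by nlinarith [mul_pos htpos hpos]
  have hSGpos : 0 < S * G := by nlinarith [h1, mul_self_nonneg PA]
  have hSG2 : (S * G) * (S * G) = 1 := by linear_combination (G*G) * hS2 + hGG
  have hfac : (S * G - 1) * (S * G + 1) = 0 := by linear_combination hSG2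
  rcases mul_eq_zero.mp hfac with h2|h2
  · rw [hdet]; linarith [sub_eq_zero.mp h2]
  · exfalso; nlinarith

-- helpers on Fin 3
lemma fin3_univ {i1 i2 i3 : Fin 3} (h12 : i1 ≠ i2) (h13 : i1 ≠ i3) (h23 : i2 ≠ i3)
    (x : Fin 3) : x = i1 ∨ x = i2 ∨ x = i3 := by
  by_contra hc
  push_neg at hc
  obtain ⟨h1, h2, h3⟩ := hc
  have hcard : ({x, i1, i2, i3} : Finset (Fin 3)).card ≤ 3 :=
    le_trans (Finset.card_le_univ _) (by simp)
  rw [Finset.card_insert_of_notMem (by simp [h1, h2, h3]),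
      Finset.card_insert_of_notMem (by simp [h12, h13]),
      Finset.card_insert_of_notMem (by simp [h23]),
      Finset.card_singleton] at hcard
  omega

lemma univ_eq_three {i1 i2 i3 : Fin 3} (h12 : i1 ≠ i2) (h13 : i1 ≠ i3) (h23 : i2 ≠ i3) :
    (Finset.univ : Finset (Fin 3)) = {i1, i2, i3} := by
  symm
  apply Finset.eq_univ_iff_forall.mpr
  intro x
  rcases fin3_univ h12 h13 h23 x with rfl|rfl|rfl <;> simp

lemma sum_three {M : Type*} [AddCommMonoid M] (f : Fin 3 → M) {i1 i2 i3 : Fin 3}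
    (h12 : i1 ≠ i2) (h13 : i1 ≠ i3) (h23 : i2 ≠ i3) :
    ∑ x, f x = f i1 + f i2 + f i3 := by
  rw [univ_eq_three h12 h13 h23,
    Finset.sum_insert (by simp [h12, h13]),
    Finset.sum_insert (by simp [h23]), Finset.sum_singleton]
  exact (add_assoc _ _ _).symm

lemma prod_three {M : Type*} [CommMonoid M] (f : Fin 3 → M) {i1 i2 i3 : Fin 3}
    (h12 : i1 ≠ i2) (h13 : i1 ≠ i3) (h23 : i2 ≠ i3) :
    ∏ x, f x = f i1 * f i2 * f i3 := by
  rw [univ_eq_three h12 h13 h23,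
    Finset.prod_insert (by simp [h12, h13]),
    Finset.prod_insert (by simp [h23]), Finset.prod_singleton, mul_assoc]


lemma one_unit_orth {u v : ℝ} (hu : u^2 = 1) (hv : v^2 = 1) (huv : u * v = 0) : False := by
  have h : (u*v)^2 = 1 := by rw [mul_pow, hu, hv]; norm_num
  rw [huv] at h; norm_num at h

lemma two_unit_orth {a1 a2 b1 b2 c1 c2 : ℝ} (ha : a1^2 + a2^2 = 1)
    (hb : b1^2 + b2^2 = 1) (hc : c1^2 + c2^2 = 1)
    (hab : a1*b1 + a2*b2 = 0) (hac : a1*c1 + a2*c2 = 0) (hbc : b1*c1 + b2*c2 = 0) :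
    False := by
  have h1 : (a1*b2 - a2*b1)^2 = 1 := by
    linear_combination (b1^2 + b2^2) * ha + hb - (a1*b1 + a2*b2) * hab
  have h2 : (a1*c2 - a2*c1)^2 = 1 := by
    linear_combination (c1^2 + c2^2) * ha + hc - (a1*c1 + a2*c2) * hac
  have h3 : (a1*b2 - a2*b1) * (a1*c2 - a2*c1) = 0 := by
    linear_combination (b1*c1 + b2*c2) * ha + hbc - (a1*b1 + a2*b2) * hac
  have h4 : ((a1*b2 - a2*b1) * (a1*c2 - a2*c1))^2 = 1 := by rw [mul_pow, h1, h2]; norm_num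
  rw [h3] at h4; norm_num at h4

lemma core3 {O P : M3} {d e : Fin 3 → ℝ}
    (E1 : ∀ i j, O i j * d j = e i * P i j)
    (he : ∀ i, e i ≠ 0)
    (hdetO : ∑ r, term O r = 1) (hdetP : ∑ r, term P r = 1) :
    ∀ r, term P r = term O r := by
  have hkey : ∀ r, (∏ i, e i) * term P r = (∏ j, d j) * term O r := by
    intro r
    have hp : ∏ j, (e (r j) * P (r j) j) = ∏ j, (O (r j) j * d j) :=
      Finset.prod_congr rfl fun j _ => (E1 (r j) j).symm
    rw [Finset.prod_mul_distrib, Finset.prod_mul_distrib] at hp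
    rw [Equiv.prod_comp r e] at hp
    unfold term
    linear_combination ((Equiv.Perm.sign r : ℤ) : ℝ) * hp
  have hsum : ∑ r, (∏ i, e i) * term P r = ∑ r, (∏ j, d j) * term O r :=
    Finset.sum_congr rfl fun r _ => hkey r
  rw [← Finset.mul_sum, ← Finset.mul_sum, hdetP, hdetO, mul_one, mul_one] at hsum
  intro r
  have h2 := hkey r
  rw [← hsum] at h2
  exact mul_left_cancel₀ (Finset.prod_ne_zero_iff.mpr fun i _ => he i) h2


lemma core2 {O P : M3} {d e : Fin 3 → ℝ}
    (E1 : ∀ i j, O i j * d j = e i * P i j)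
    (E3 : ∀ i j, O i j * (d j ^ 2 - e i ^ 2) = 0)
    (E4 : ∀ i j, P i j * (d j ^ 2 - e i ^ 2) = 0)
    (colsO : ∀ j j', ∑ i, O i j * O i j' = if j = j' then 1 else 0)
    (hdetO : ∑ r, term O r = 1) (hdetP : ∑ r, term P r = 1)
    {i1 i2 i3 : Fin 3} (hi12 : i1 ≠ i2) (hi13 : i1 ≠ i3) (hi23 : i2 ≠ i3)
    {j0 j1 j2 : Fin 3} (hj01 : j0 ≠ j1) (hj02 : j0 ≠ j2) (hj12 : j1 ≠ j2)
    (hd0 : d j0 ≠ 0)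
    (he1 : e i1 ^ 2 = d j0 ^ 2) (he2 : e i2 ^ 2 = d j0 ^ 2) (he3 : e i3 ^ 2 ≠ d j0 ^ 2)
    (hd1 : d j1 ^ 2 = d j0 ^ 2) (hd2 : d j2 ^ 2 ≠ d j0 ^ 2) :
    ∀ r, term P r = term O r := by
  -- zero entries
  have zO30 : O i3 j0 = 0 := by
    rcases mul_eq_zero.mp (E3 i3 j0) with h|h
    · exact h
    · exact absurd (by linarith [sub_eq_zero.mp h] : e i3 ^ 2 = d j0 ^2) he3
  have zO31 : O i3 j1 = 0 := by
    rcases mul_eq_zero.mp (E3 i3 j1) with h|h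
    · exact h
    · exact absurd (by have := sub_eq_zero.mp h; linarith : e i3 ^ 2 = d j0 ^2) he3
  have zO12 : O i1 j2 = 0 := by
    rcases mul_eq_zero.mp (E3 i1 j2) with h|h
    · exact h
    · exact absurd (by have := sub_eq_zero.mp h; linarith : d j2 ^ 2 = d j0 ^2) hd2
  have zO22 : O i2 j2 = 0 := by
    rcases mul_eq_zero.mp (E3 i2 j2) with h|h
    · exact h
    · exact absurd (by have := sub_eq_zero.mp h; linarith : d j2 ^ 2 = d j0 ^2) hd2
  have zP30 : P i3 j0 = 0 := by
    rcases mul_eq_zero.mp (E4 i3 j0) with h|h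
    · exact h
    · exact absurd (by have := sub_eq_zero.mp h; linarith : e i3 ^ 2 = d j0 ^2) he3
  have zP31 : P i3 j1 = 0 := by
    rcases mul_eq_zero.mp (E4 i3 j1) with h|h
    · exact h
    · exact absurd (by have := sub_eq_zero.mp h; linarith : e i3 ^ 2 = d j0 ^2) he3
  have zP12 : P i1 j2 = 0 := by
    rcases mul_eq_zero.mp (E4 i1 j2) with h|h
    · exact h
    · exact absurd (by have := sub_eq_zero.mp h; linarith : d j2 ^ 2 = d j0 ^2) hd2
  have zP22 : P i2 j2 = 0 := by
    rcases mul_eq_zero.mp (E4 i2 j2) with h|h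
    · exact h
    · exact absurd (by have := sub_eq_zero.mp h; linarith : d j2 ^ 2 = d j0 ^2) hd2
  set ε : ℝ := O i3 j2 with hεdef
  set ε' : ℝ := P i3 j2 with hε'def
  have hε2 : ε ^ 2 = 1 := by
    have hc := colsO j2 j2
    rw [sum_three (fun i => O i j2 * O i j2) hi12 hi13 hi23, if_pos rfl,
        zO12, zO22] at hc
    have : ε * ε = 1 := by linarith [hc]
    nlinarith [this]
  have hεne : ε ≠ 0 := by intro h; rw [h] at hε2; norm_num at hε2
  have he1ne : e i1 ≠ 0 := by
    intro h; rw [h] at he1; have : d j0 ^ 2 = 0 := by linarith [he1]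
    exact hd0 (pow_eq_zero_iff (n := 2) (by norm_num) |>.mp this)
  have he2ne : e i2 ≠ 0 := by
    intro h; rw [h] at he2; have : d j0 ^ 2 = 0 := by linarith [he2]
    exact hd0 (pow_eq_zero_iff (n := 2) (by norm_num) |>.mp this)
  have hkey : ∀ r, (e i1 * e i2 * ε) * term P r = (d j0 * d j1 * ε') * term O r := by
    intro r
    have tO : term O r = ((Equiv.Perm.sign r : ℤ) : ℝ) *
        (O (r j0) j0 * O (r j1) j1 * O (r j2) j2) := by
      unfold term; rw [prod_three (fun j => O (r j) j) hj01 hj02 hj12]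
    have tP : term P r = ((Equiv.Perm.sign r : ℤ) : ℝ) *
        (P (r j0) j0 * P (r j1) j1 * P (r j2) j2) := by
      unfold term; rw [prod_three (fun j => P (r j) j) hj01 hj02 hj12]
    set S : ℝ := ((Equiv.Perm.sign r : ℤ) : ℝ) with hS
    rcases fin3_univ hi12 hi13 hi23 (r j2) with h2|h2|h2
    · rw [tO, tP, h2, zO12, zP12]; ring
    · rw [tO, tP, h2, zO22, zP22]; ring
    · rcases fin3_univ hi12 hi13 hi23 (r j0) with h0|h0|h0
      · have h1 : r j1 = i2 := by
          rcases fin3_univ hi12 hi13 hi23 (r j1) with h1|h1|h1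
          · exact absurd (r.injective (h0 ▸ h1 : r j1 = r j0)) (Ne.symm hj01)
          · exact h1
          · exact absurd (r.injective (h2 ▸ h1 : r j1 = r j2)) hj12
        rw [tO, tP, h0, h1, h2, ← hεdef, ← hε'def]
        linear_combination (-(S * ε * ε' * e i2 * P i2 j1)) * E1 i1 j0 +
          (-(S * ε * ε' * O i1 j0 * d j0)) * E1 i2 j1
      · have h1 : r j1 = i1 := by
          rcases fin3_univ hi12 hi13 hi23 (r j1) with h1|h1|h1
          · exact h1
          · exact absurd (r.injective (h0 ▸ h1 : r j1 = r j0)) (Ne.symm hj01)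
          · exact absurd (r.injective (h2 ▸ h1 : r j1 = r j2)) hj12
        rw [tO, tP, h0, h1, h2, ← hεdef, ← hε'def]
        linear_combination (-(S * ε * ε' * e i1 * P i1 j1)) * E1 i2 j0 +
          (-(S * ε * ε' * O i2 j0 * d j0)) * E1 i1 j1
      · exact absurd (r.injective (h2 ▸ h0 : r j0 = r j2)) hj02
  have hsum : ∑ r, (e i1 * e i2 * ε) * term P r = ∑ r, (d j0 * d j1 * ε') * term O r :=
    Finset.sum_congr rfl fun r _ => hkey r
  rw [← Finset.mul_sum, ← Finset.mul_sum, hdetP, hdetO, mul_one, mul_one] at hsum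
  intro r
  have h2 := hkey r
  rw [← hsum] at h2
  exact mul_left_cancel₀ (mul_ne_zero (mul_ne_zero he1ne he2ne) hεne) h2


lemma fin3_other (j : Fin 3) : ∃ ja jb : Fin 3, j ≠ ja ∧ j ≠ jb ∧ ja ≠ jb := by
  revert j; decide

lemma key {O P : M3} {d e : Fin 3 → ℝ} (hOo : O * Oᵀ = 1) (hOd : O.det = 1)
    (hPo : P * Pᵀ = 1) (hPd : P.det = 1)
    (h : O * Matrix.diagonal d * Pᵀ = Matrix.diagonal e) :
    Phi O * Matrix.diagonal d * (Phi P)ᵀ = Matrix.diagonal e := by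
  have hPtP : Pᵀ * P = 1 := mul_eq_one_comm.mp hPo
  have hOtO : Oᵀ * O = 1 := mul_eq_one_comm.mp hOo
  have h1 : O * diagonal d = diagonal e * P := by
    calc O * diagonal d = O * diagonal d * (Pᵀ * P) := by rw [hPtP, mul_one]
      _ = (O * diagonal d * Pᵀ) * P := (mul_assoc _ _ _).symm
      _ = diagonal e * P := by rw [h]
  have E1 : ∀ i j, O i j * d j = e i * P i j := by
    intro i j
    have h2 : (O * diagonal d) i j = (diagonal e * P) i j := by rw [h1]
    simpa [Matrix.mul_diagonal, Matrix.diagonal_mul] using h2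
  have ht : P * Matrix.diagonal d * Oᵀ = Matrix.diagonal e := by
    have h2 := congrArg Matrix.transpose h
    simpa [Matrix.transpose_mul, Matrix.diagonal_transpose, mul_assoc] using h2
  have h1' : P * diagonal d = diagonal e * O := by
    calc P * diagonal d = P * diagonal d * (Oᵀ * O) := by rw [hOtO, mul_one]
      _ = (P * diagonal d * Oᵀ) * O := (mul_assoc _ _ _).symm
      _ = diagonal e * O := by rw [ht]
  have E2 : ∀ i j, P i j * d j = e i * O i j := by
    intro i j
    have h2 : (P * diagonal d) i j = (diagonal e * O) i j := by rw [h1']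
    simpa [Matrix.mul_diagonal, Matrix.diagonal_mul] using h2
  have E3 : ∀ i j, O i j * (d j ^ 2 - e i ^ 2) = 0 := fun i j => by
    linear_combination d j * E1 i j + e i * E2 i j
  have E4 : ∀ i j, P i j * (d j ^ 2 - e i ^ 2) = 0 := fun i j => by
    linear_combination d j * E2 i j + e i * E1 i j
  have colsO : ∀ j j', ∑ i, O i j * O i j' = if j = j' then 1 else 0 := by
    intro j j'
    have h2 : (Oᵀ * O) j j' = (1 : M3) j j' := by rw [hOtO]
    simpa [Matrix.mul_apply, Matrix.transpose_apply, Matrix.one_apply] using h2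
  have hdetO' : ∑ r, term O r = 1 := by rw [← det_eq_sum_term, hOd]
  have hdetP' : ∑ r, term P r = 1 := by rw [← det_eq_sum_term, hPd]
  -- eigenvalue-square facts at picked entries
  have heO : ∀ j, e (pick O j) ^ 2 = d j ^ 2 := by
    intro j
    rcases mul_eq_zero.mp (E3 (pick O j) j) with hz|hz
    · exact absurd hz (entry_ne hOd j)
    · have h2 := sub_eq_zero.mp hz; linarith
  have heP : ∀ j, e (pick P j) ^ 2 = d j ^ 2 := by
    intro j
    rcases mul_eq_zero.mp (E4 (pick P j) j) with hz|hz
    · exact absurd hz (entry_ne hPd j)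
    · have h2 := sub_eq_zero.mp hz; linarith
  -- K1 : picks agree on non-degenerate columns
  have K1 : ∀ j, d j ≠ 0 → pick O j = pick P j := by
    intro j hdj
    by_cases hall : ∀ i, e i ^ 2 = d j ^ 2
    · have he : ∀ i, e i ≠ 0 := by
        intro i h0
        apply hdj
        have h2 := hall i
        rw [h0] at h2
        have : d j ^ 2 = 0 := by linarith
        exact pow_eq_zero_iff (n := 2) (by norm_num) |>.mp this
      have hterm := core3 E1 he hdetO' hdetP'
      rw [pick_congr hterm]
    · push_neg at hall
      obtain ⟨i3, hi3⟩ := hall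
      by_cases hq : pick O j = pick P j
      · exact hq
      · exfalso
        have he1 : e (pick O j) ^ 2 = d j ^ 2 := heO j
        have he2 : e (pick P j) ^ 2 = d j ^ 2 := heP j
        have hi13 : pick O j ≠ i3 := fun hh => hi3 (hh ▸ he1)
        have hi23 : pick P j ≠ i3 := fun hh => hi3 (hh ▸ he2)
        obtain ⟨ja, jb, hj0a, hj0b, hjab⟩ := fin3_other j
        have zO3j : O i3 j = 0 := by
          rcases mul_eq_zero.mp (E3 i3 j) with hz|hz
          · exact hz
          · exact absurd (by have := sub_eq_zero.mp hz; linarith : e i3 ^ 2 = d j ^ 2) hi3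
        by_cases hda : d ja ^ 2 = d j ^ 2 <;> by_cases hdb : d jb ^ 2 = d j ^ 2
        · -- both other columns in the same block : impossible
          have zO3a : O i3 ja = 0 := by
            rcases mul_eq_zero.mp (E3 i3 ja) with hz|hz
            · exact hz
            · exact absurd (by have := sub_eq_zero.mp hz; linarith : e i3 ^ 2 = d j ^ 2) hi3
          have zO3b : O i3 jb = 0 := by
            rcases mul_eq_zero.mp (E3 i3 jb) with hz|hz
            · exact hz
            · exact absurd (by have := sub_eq_zero.mp hz; linarith : e i3 ^ 2 = d j ^ 2) hi3
          have na := colsO j j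
          rw [sum_three (fun i => O i j * O i j) hq hi13 hi23, if_pos rfl, zO3j] at na
          have nb := colsO ja ja
          rw [sum_three (fun i => O i ja * O i ja) hq hi13 hi23, if_pos rfl, zO3a] at nb
          have nc := colsO jb jb
          rw [sum_three (fun i => O i jb * O i jb) hq hi13 hi23, if_pos rfl, zO3b] at nc
          have oab := colsO j ja
          rw [sum_three (fun i => O i j * O i ja) hq hi13 hi23, if_neg hj0a, zO3j] at oab
          have oac := colsO j jb
          rw [sum_three (fun i => O i j * O i jb) hq hi13 hi23, if_neg hj0b, zO3j] at oac
          have obc := colsO ja jb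
          rw [sum_three (fun i => O i ja * O i jb) hq hi13 hi23, if_neg hjab, zO3a] at obc
          exact two_unit_orth (a1 := O (pick O j) j) (a2 := O (pick P j) j)
            (b1 := O (pick O j) ja) (b2 := O (pick P j) ja)
            (c1 := O (pick O j) jb) (c2 := O (pick P j) jb)
            (by linear_combination na) (by linear_combination nb)
            (by linear_combination nc) (by linear_combination oab)
            (by linear_combination oac) (by linear_combination obc)
        · exact hq (by rw [pick_congr (core2 E1 E3 E4 colsO hdetO' hdetP' hq hi13 hi23
            hj0a hj0b hjab hdj he1 he2 hi3 hda hdb)])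
        · exact hq (by rw [pick_congr (core2 E1 E3 E4 colsO hdetO' hdetP' hq hi13 hi23
            hj0b hj0a (Ne.symm hjab) hdj he1 he2 hi3 hdb hda)])
        · -- neither : two unit columns supported on one row : impossible
          have zO1a : O (pick O j) ja = 0 := by
            rcases mul_eq_zero.mp (E3 (pick O j) ja) with hz|hz
            · exact hz
            · exact absurd (by have := sub_eq_zero.mp hz; linarith : d ja ^ 2 = d j ^ 2) hda
          have zO2a : O (pick P j) ja = 0 := by
            rcases mul_eq_zero.mp (E3 (pick P j) ja) with hz|hz
            · exact hz
            · exact absurd (by have := sub_eq_zero.mp hz; linarith : d ja ^ 2 = d j ^ 2) hda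
          have zO1b : O (pick O j) jb = 0 := by
            rcases mul_eq_zero.mp (E3 (pick O j) jb) with hz|hz
            · exact hz
            · exact absurd (by have := sub_eq_zero.mp hz; linarith : d jb ^ 2 = d j ^ 2) hdb
          have zO2b : O (pick P j) jb = 0 := by
            rcases mul_eq_zero.mp (E3 (pick P j) jb) with hz|hz
            · exact hz
            · exact absurd (by have := sub_eq_zero.mp hz; linarith : d jb ^ 2 = d j ^ 2) hdb
          have nb := colsO ja ja
          rw [sum_three (fun i => O i ja * O i ja) hq hi13 hi23, if_pos rfl, zO1a, zO2a] at nb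
          have nc := colsO jb jb
          rw [sum_three (fun i => O i jb * O i jb) hq hi13 hi23, if_pos rfl, zO1b, zO2b] at nc
          have obc := colsO ja jb
          rw [sum_three (fun i => O i ja * O i jb) hq hi13 hi23, if_neg hjab, zO1a, zO2a] at obc
          exact one_unit_orth (u := O i3 ja) (v := O i3 jb)
            (by linear_combination nb) (by linear_combination nc) (by linear_combination obc)
  -- K2 : sign compatibility
  have K2 : ∀ j, pick O j = pick P j → sg O j * d j = e (pick O j) * sg P j := by
    intro j hj
    by_cases hdj : d j = 0
    · have he0 : e (pick O j) = 0 := by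
        have h2 := heO j
        rw [hdj] at h2
        have : e (pick O j) ^ 2 = 0 := by linarith
        exact pow_eq_zero_iff (n := 2) (by norm_num) |>.mp this
      rw [hdj, he0]; ring
    · have hE := E1 (pick O j) j
      have hPb : P (pick O j) j = P (pick P j) j := by rw [hj]
      rw [hPb] at hE
      have hfac : (e (pick O j) - d j) * (e (pick O j) + d j) = 0 := by
        linear_combination heO j
      rcases mul_eq_zero.mp hfac with hf|hf
      · have hed : e (pick O j) = d j := sub_eq_zero.mp hf
        have hab : O (pick O j) j = P (pick P j) j := by
          apply mul_right_cancel₀ hdj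
          linear_combination hE + P (pick P j) j * hed
        unfold sg
        rw [hab, hed]; ring
      · have hed : e (pick O j) = - d j := by linarith [add_eq_zero_iff_eq_neg.mp hf]
        have hab : O (pick O j) j = - P (pick P j) j := by
          apply mul_right_cancel₀ hdj
          linear_combination hE + P (pick P j) j * hed
        unfold sg
        rw [hab, hed]
        by_cases hb : 0 < P (pick P j) j
        · rw [if_pos hb, if_neg (by linarith : ¬ 0 < -P (pick P j) j)]; ring
        · push_neg at hb
          have hbne : P (pick P j) j ≠ 0 := entry_ne hPd j
          have hb' : 0 < -P (pick P j) j := by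
            have := lt_of_le_of_ne hb hbne; linarith
          rw [if_neg (by linarith : ¬ 0 < P (pick P j) j), if_pos hb']; ring
  -- final computation
  ext i k
  rw [Matrix.mul_apply]
  simp only [Matrix.mul_diagonal, Matrix.transpose_apply]
  rw [Finset.sum_eq_single ((pick O).symm i)]
  · have hi : i = pick O ((pick O).symm i) := (Equiv.apply_symm_apply (pick O) i).symm
    rw [phi_apply, if_pos hi]
    set j := (pick O).symm i with hjdef
    by_cases hik : i = k
    · subst hik
      rw [Matrix.diagonal_apply_eq]
      by_cases hpp : pick O j = pick P j
      · have hPhiP : Phi P i j = sg P j := by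
          rw [phi_apply, if_pos (hi.trans hpp)]
        rw [hPhiP]
        have hK := K2 j hpp
        rw [← hi] at hK
        calc sg O j * d j * sg P j = (e i * sg P j) * sg P j := by rw [hK]
          _ = e i * (sg P j * sg P j) := by ring
          _ = e i := by rw [sg_sq]; ring
      · have hd0 : d j = 0 := by
          by_contra hc; exact hpp (K1 j hc)
        have he0 : e (pick O j) = 0 := by
          have h2 := heO j
          rw [hd0] at h2
          have : e (pick O j) ^ 2 = 0 := by linarith
          exact pow_eq_zero_iff (n := 2) (by norm_num) |>.mp this
        rw [← hi] at he0
        rw [hd0, he0]; ring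
    · rw [Matrix.diagonal_apply_ne _ hik]
      by_cases hk : k = pick P j
      · have hd0 : d j = 0 := by
          by_contra hc
          exact hik (hi.trans ((K1 j hc).trans hk.symm))
        rw [hd0]; ring
      · rw [phi_apply, if_neg hk]; ring
  · intro j _ hj
    have : i ≠ pick O j := by
      intro hc
      exact hj (by rw [hc, Equiv.symm_apply_apply])
    rw [phi_apply, if_neg this]; ring
  · simp


lemma signedPerm_orth {M : M3} (h : IsSignedPerm M) : M * Mᵀ = 1 := by
  obtain ⟨p, s, hs, rfl⟩ := h
  ext i k
  rw [Matrix.mul_apply]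
  simp only [Matrix.transpose_apply, Matrix.of_apply]
  rw [Finset.sum_eq_single (p.symm i)]
  · rw [if_pos (p.apply_symm_apply i).symm]
    by_cases hik : k = i
    · subst hik
      rw [if_pos (p.apply_symm_apply k).symm, Matrix.one_apply_eq]
      rcases hs (p.symm k) with h'|h' <;> rw [h'] <;> norm_num
    · rw [if_neg (fun hc => hik (hc.trans (p.apply_symm_apply i))),
          Matrix.one_apply_ne (fun hc => hik hc.symm)]
      ring
  · intro j _ hj
    rw [if_neg (fun hc => hj (by rw [hc, Equiv.symm_apply_apply])), zero_mul]
  · simp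


end XYZaux

theorem XYZ_stoquastic_by_unitaries_iff_by_cliffords
    {V : Type*} (E : Set (V × V)) (d : V → V → Fin 3 → ℝ) :
    (∃ O : V → Matrix (Fin 3) (Fin 3) ℝ, (∀ u, IsSO3 (O u)) ∧
      ∀ uv ∈ E, ∃ e : Fin 3 → ℝ,
        O uv.1 * Matrix.diagonal (d uv.1 uv.2) * (O uv.2)ᵀ = Matrix.diagonal e ∧
        e 0 ≤ -|e 1|) ↔
    (∃ Q : V → Matrix (Fin 3) (Fin 3) ℝ, (∀ u, IsSignedPerm (Q u) ∧ (Q u).det = 1) ∧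
      ∀ uv ∈ E, ∃ e : Fin 3 → ℝ,
        Q uv.1 * Matrix.diagonal (d uv.1 uv.2) * (Q uv.2)ᵀ = Matrix.diagonal e ∧
        e 0 ≤ -|e 1|) := by
  constructor
  · rintro ⟨O, hO, hE⟩
    refine ⟨fun u => XYZaux.Phi (O u), fun u => ⟨XYZaux.phi_signedPerm _, XYZaux.det_phi (hO u).2⟩, ?_⟩
    intro uv huv
    obtain ⟨e, he, hcond⟩ := hE uv huv
    exact ⟨e, XYZaux.key (hO uv.1).1 (hO uv.1).2 (hO uv.2).1 (hO uv.2).2 he, hcond⟩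
  · rintro ⟨Q, hQ, hE⟩
    exact ⟨Q, fun u => ⟨XYZaux.signedPerm_orth (hQ u).1, (hQ u).2⟩, hE⟩
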